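/- Uniqueness of extensions: if X, Y are effective sets, f : X → El(Y) is stable, and g, h : El(X) → El(Y) are both extensions of f (i.e. ⊨ ∀x ∈ X, |g(el_X(x)) =_{El(Y)} f(x)| and similarly for h), then g ≈ h, i.e. ⊨ ∀u ∈ |El(X)|, |u =_{El(X)} u| ⇒ |g(u) =_{El(Y)} h(u)|. -/

import Mathlib

open Nat.Partrec (Code)

/-- `φ_e(n)` : evaluation of the `e`-th partial recursive function. -/
def Phi (e n : ℕ) : Part ℕ := (Denumerable.ofNat Code e).eval n

/-- Realisability implication. -/
def rImp (F G : Set ℕ) : Set ℕ := {e | ∀ n ∈ F, ∃ m ∈ G, m ∈ Phi e n}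

/-- Realisability conjunction via pairing. -/
def rAnd (F G : Set ℕ) : Set ℕ := {k | ∃ n ∈ F, ∃ m ∈ G, k = Nat.pair n m}

/-- Realisability bi-implication. -/
def rIff (F G : Set ℕ) : Set ℕ := rAnd (rImp F G) (rImp G F)

/-- Realisability universal quantification (intersection). -/
def rAll {X : Type} (H : X → Set ℕ) : Set ℕ := ⋂ x, H x

/-- Realisability existential quantification (union). -/
def rEx {X : Type} (H : X → Set ℕ) : Set ℕ := ⋃ x, H x

/-- Realisability symmetry of a relation. -/
def IsSymm' {X : Type} (eqX : X → X → Set ℕ) : Prop :=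
  (rAll fun x => rAll fun y => rImp (eqX x y) (eqX y x)).Nonempty

/-- Realisability transitivity of a relation. -/
def IsTrans' {X : Type} (eqX : X → X → Set ℕ) : Prop :=
  (rAll fun x => rAll fun y => rAll fun z =>
    rImp (eqX x y) (rImp (eqX y z) (eqX x z))).Nonempty

/-- `eqX` makes its carrier an effective set. -/
def IsEff {X : Type} (eqX : X → X → Set ℕ) : Prop := IsSymm' eqX ∧ IsTrans' eqX

/-- Equality of `El(X)` : stability ∧ unicity ∧ existence ∧ equivalence. -/
def elEq {X : Type} (eqX : X → X → Set ℕ) (u v : X → Set ℕ) : Set ℕ :=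
  rAnd (rAll fun x => rAll fun x' => rImp (u x) (rImp (eqX x x') (u x')))
    (rAnd (rAll fun x => rAll fun x' => rImp (u x) (rImp (u x') (eqX x x')))
      (rAnd (rEx fun x => u x)
        (rAll fun x => rIff (u x) (v x))))

/-- Injection from the low level to the high level. -/
def el {X : Type} (eqX : X → X → Set ℕ) (x : X) : X → Set ℕ := fun y => eqX x y

/-! ### Auxiliary machinery -/

theorem EU.phi_partrec : Partrec₂ Phi :=
  Nat.Partrec.Code.eval_part.comp ((Computable.ofNat _).comp Computable.fst) Computable.snd

def EU.pL (n : ℕ) : ℕ := n.unpair.1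
def EU.pR (n : ℕ) : ℕ := n.unpair.2

theorem EU.pL_comp : Computable EU.pL := (Primrec.fst.comp Primrec.unpair).to_comp
theorem EU.pR_comp : Computable EU.pR := (Primrec.snd.comp Primrec.unpair).to_comp

/-- Code composition on indices. -/
def EU.cComp (s t : ℕ) : ℕ :=
  Encodable.encode (Code.comp (Denumerable.ofNat Code t) (Denumerable.ofNat Code s))

theorem EU.cComp_comp : Computable₂ EU.cComp :=
  Computable.encode.comp
    (Nat.Partrec.Code.primrec₂_comp.to_comp.comp
      ((Computable.ofNat _).comp Computable.snd) ((Computable.ofNat _).comp Computable.fst))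

theorem EU.cComp_spec {s t p m m' : ℕ} (h1 : m ∈ Phi s p) (h2 : m' ∈ Phi t m) :
    m' ∈ Phi (EU.cComp s t) p := by
  simp only [Phi, EU.cComp, Denumerable.ofNat_encode, Nat.Partrec.Code.eval]
  rw [show ((Denumerable.ofNat Code s).eval p >>= (Denumerable.ofNat Code t).eval)
      = ((Denumerable.ofNat Code s).eval p).bind ((Denumerable.ofNat Code t).eval) from rfl]
  exact Part.mem_bind_iff.2 ⟨m, h1, h2⟩

theorem EU.mem_rAnd {F G : Set ℕ} {k : ℕ} :
    k ∈ rAnd F G ↔ EU.pL k ∈ F ∧ EU.pR k ∈ G := by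
  constructor
  · rintro ⟨n, hn, m, hm, rfl⟩
    simpa [EU.pL, EU.pR] using ⟨hn, hm⟩
  · rintro ⟨h1, h2⟩
    exact ⟨_, h1, _, h2, (Nat.pair_unpair k).symm⟩

theorem EU.rAnd_intro {F G : Set ℕ} {n m : ℕ} (h1 : n ∈ F) (h2 : m ∈ G) :
    Nat.pair n m ∈ rAnd F G := ⟨n, h1, m, h2, rfl⟩

theorem EU.mem_rAll {X : Type} {H : X → Set ℕ} {k : ℕ} :
    k ∈ rAll H ↔ ∀ x, k ∈ H x := Set.mem_iInter

theorem EU.uniform {p : Part ℕ} {t : ℕ} (ht : t ∈ p) {α : Sort*} {G : α → Set ℕ}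
    (h : ∀ x, ∃ m ∈ G x, m ∈ p) : ∀ x, t ∈ G x := fun x => by
  obtain ⟨m, hm, hmp⟩ := h x
  rwa [Part.mem_unique hmp ht] at hm

namespace EU

/-- projections of a 4-tuple realiser of `elEq`. -/
def c1 (k : ℕ) : ℕ := pL k
def c2 (k : ℕ) : ℕ := pL (pR k)
def c3 (k : ℕ) : ℕ := pL (pR (pR k))
def c4 (k : ℕ) : ℕ := pR (pR (pR k))
def f4 (k : ℕ) : ℕ := pL (c4 k)
def b4 (k : ℕ) : ℕ := pR (c4 k)

/-- the realiser `E(n)` of `elEq eqX u (el eqX x0)`. -/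
def EE (n t1 t2 : ℕ) : ℕ :=
  Nat.pair (c1 n) (Nat.pair (c2 n) (Nat.pair (c3 n) (Nat.pair t1 t2)))

/-- assembly of the output realiser. -/
def out (a b c d : ℕ) : ℕ :=
  Nat.pair (c1 a) (Nat.pair (c2 a) (Nat.pair (c3 a)
    (Nat.pair (cComp (cComp (f4 a) (f4 c)) (cComp (b4 d) (b4 b)))
              (cComp (cComp (f4 b) (f4 d)) (cComp (b4 c) (b4 a))))))


@[simp] theorem pL_pair (a b : ℕ) : pL (Nat.pair a b) = a := by simp [pL]
@[simp] theorem pR_pair (a b : ℕ) : pR (Nat.pair a b) = b := by simp [pR]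

theorem c1_comp : Computable c1 := pL_comp
theorem c2_comp : Computable c2 := pL_comp.comp pR_comp
theorem c3_comp : Computable c3 := pL_comp.comp (pR_comp.comp pR_comp)
theorem c4_comp : Computable c4 := pR_comp.comp (pR_comp.comp pR_comp)
theorem f4_comp : Computable f4 := pL_comp.comp c4_comp
theorem b4_comp : Computable b4 := pR_comp.comp c4_comp

theorem pair_comp : Computable₂ Nat.pair := Primrec₂.natPair.to_comp

theorem EE_comp {α : Type} [Primcodable α] {f g h : α → ℕ}
    (hf : Computable f) (hg : Computable g) (hh : Computable h) :
    Computable fun x => EE (f x) (g x) (h x) :=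
  pair_comp.comp (c1_comp.comp hf)
    (pair_comp.comp (c2_comp.comp hf)
      (pair_comp.comp (c3_comp.comp hf) (pair_comp.comp hg hh)))

theorem out_comp {α : Type} [Primcodable α] {fa fb fc fd : α → ℕ}
    (ha : Computable fa) (hb : Computable fb) (hc : Computable fc) (hd : Computable fd) :
    Computable fun x => out (fa x) (fb x) (fc x) (fd x) :=
  pair_comp.comp (c1_comp.comp ha)
    (pair_comp.comp (c2_comp.comp ha)
      (pair_comp.comp (c3_comp.comp ha)
        (pair_comp.comp
          (cComp_comp.comp (cComp_comp.comp (f4_comp.comp ha) (f4_comp.comp hc))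
            (cComp_comp.comp (b4_comp.comp hd) (b4_comp.comp hb)))
          (cComp_comp.comp (cComp_comp.comp (f4_comp.comp hb) (f4_comp.comp hd))
            (cComp_comp.comp (b4_comp.comp hc) (b4_comp.comp ha))))))

/-- one computation step, accumulating the result in the state. -/
def step (i j : ℕ → ℕ) (s : ℕ) : Part ℕ := (Phi (i s) (j s)).map (Nat.pair s)

theorem step_partrec {i j : ℕ → ℕ} (hi : Computable i) (hj : Computable j) :
    Partrec (step i j) := by
  unfold step
  refine Partrec.map (phi_partrec.comp hi hj) ?_
  exact pair_comp.comp Computable.fst Computable.snd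

theorem step_mem {i j : ℕ → ℕ} {s v : ℕ} (h : v ∈ Phi (i s) (j s)) :
    Nat.pair s v ∈ step i j s := (Part.mem_map_iff _).2 ⟨v, h, rfl⟩

theorem pbind {f g : ℕ →. ℕ} (hf : Partrec f) (hg : Partrec g) :
    Partrec fun n => (f n).bind g :=
  hf.bind (hg.comp Computable.snd)

def st1 : ℕ →. ℕ := step c2 c3
def st2 : ℕ →. ℕ := step pR (fun s => c3 (pL s))
def st3 : ℕ →. ℕ := step (fun s => c1 (pL (pL s))) (fun s => c3 (pL (pL s)))
def st4 (G0 : ℕ) : ℕ →. ℕ :=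
  step (fun _ => G0) (fun s => EE (pL (pL (pL s))) (pR (pL (pL s))) (pR s))
def st5 (H0 : ℕ) : ℕ →. ℕ :=
  step (fun _ => H0) (fun s => EE (pL (pL (pL (pL s)))) (pR (pL (pL (pL s)))) (pR (pL s)))
def st6 (Ge : ℕ) : ℕ →. ℕ := step (fun _ => Ge) (fun s => pR (pL (pL (pL s))))
def st7 (He : ℕ) : ℕ →. ℕ := step (fun _ => He) (fun s => pR (pL (pL (pL (pL s)))))
def outF (s : ℕ) : ℕ := out (pR (pL (pL (pL s)))) (pR (pL (pL s))) (pR (pL s)) (pR s)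

/-- the partial function computed by the top-level realiser. -/
def FF (G0 H0 Ge He : ℕ) (n : ℕ) : Part ℕ :=
  (((((((st1 n).bind st2).bind st3).bind (st4 G0)).bind (st5 H0)).bind
    (st6 Ge)).bind (st7 He)).map outF

theorem outF_comp : Computable outF :=
  out_comp (pR_comp.comp (pL_comp.comp (pL_comp.comp pL_comp)))
    (pR_comp.comp (pL_comp.comp pL_comp)) (pR_comp.comp pL_comp) pR_comp

theorem FF_partrec (G0 H0 Ge He : ℕ) : Partrec (FF G0 H0 Ge He) := by
  unfold FF
  have h1 : Partrec st1 := step_partrec c2_comp c3_comp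
  have h2 : Partrec st2 := step_partrec pR_comp (c3_comp.comp pL_comp)
  have h3 : Partrec st3 :=
    step_partrec (c1_comp.comp (pL_comp.comp pL_comp)) (c3_comp.comp (pL_comp.comp pL_comp))
  have h4 : Partrec (st4 G0) :=
    step_partrec (Computable.const G0)
      (EE_comp (pL_comp.comp (pL_comp.comp pL_comp)) (pR_comp.comp (pL_comp.comp pL_comp))
        pR_comp)
  have h5 : Partrec (st5 H0) :=
    step_partrec (Computable.const H0)
      (EE_comp (pL_comp.comp (pL_comp.comp (pL_comp.comp pL_comp)))
        (pR_comp.comp (pL_comp.comp (pL_comp.comp pL_comp))) (pR_comp.comp pL_comp))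
  have h6 : Partrec (st6 Ge) :=
    step_partrec (Computable.const Ge) (pR_comp.comp (pL_comp.comp (pL_comp.comp pL_comp)))
  have h7 : Partrec (st7 He) :=
    step_partrec (Computable.const He)
      (pR_comp.comp (pL_comp.comp (pL_comp.comp (pL_comp.comp pL_comp))))
  exact (pbind (pbind (pbind (pbind (pbind (pbind h1 h2) h3) h4) h5) h6) h7).map
    (outF_comp.comp Computable.snd)

end EU


set_option maxHeartbeats 2000000 in
theorem extension_unique {X Y : Type}
    (eqX : X → X → Set ℕ) (eqY : Y → Y → Set ℕ)
    (hX : IsEff eqX) (hY : IsEff eqY)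
    (f : X → (Y → Set ℕ))
    (hf : (rAll fun x : X => rAll fun x' : X =>
      rImp (eqX x x') (elEq eqY (f x) (f x'))).Nonempty)
    (g h : (X → Set ℕ) → (Y → Set ℕ))
    (hg : (rAll fun u : X → Set ℕ => rAll fun u' : X → Set ℕ =>
      rImp (elEq eqX u u') (elEq eqY (g u) (g u'))).Nonempty)
    (hh : (rAll fun u : X → Set ℕ => rAll fun u' : X → Set ℕ =>
      rImp (elEq eqX u u') (elEq eqY (h u) (h u'))).Nonempty)
    (hgext : (rAll fun x : X => rImp (eqX x x)
      (elEq eqY (g (el eqX x)) (f x))).Nonempty)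
    (hhext : (rAll fun x : X => rImp (eqX x x)
      (elEq eqY (h (el eqX x)) (f x))).Nonempty) :
    (rAll fun u : X → Set ℕ =>
      rImp (elEq eqX u u) (elEq eqY (g u) (h u))).Nonempty := by
  classical
  obtain ⟨G0, hG0⟩ := hg
  obtain ⟨H0, hH0⟩ := hh
  obtain ⟨Ge, hGe⟩ := hgext
  obtain ⟨He, hHe⟩ := hhext
  obtain ⟨cF, hcF⟩ := Nat.Partrec.Code.exists_code.1 (Partrec.nat_iff.1 (EU.FF_partrec G0 H0 Ge He))
  refine ⟨Encodable.encode cF, EU.mem_rAll.2 fun u => ?_⟩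
  intro n hn
  have hPhi : Phi (Encodable.encode cF) n = EU.FF G0 H0 Ge He n := by
    simp [Phi, Denumerable.ofNat_encode, hcF]
  -- decompose n
  have hn1 : EU.c1 n ∈ rAll fun x => rAll fun x' =>
      rImp (u x) (rImp (eqX x x') (u x')) := (EU.mem_rAnd.1 hn).1
  have hn2 : EU.c2 n ∈ rAll fun x => rAll fun x' =>
      rImp (u x) (rImp (u x') (eqX x x')) := (EU.mem_rAnd.1 (EU.mem_rAnd.1 hn).2).1
  have hn3 : EU.c3 n ∈ rEx fun x => u x :=
    (EU.mem_rAnd.1 (EU.mem_rAnd.1 (EU.mem_rAnd.1 hn).2).2).1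
  obtain ⟨x0, hx0⟩ := Set.mem_iUnion.1 hn3
  -- t1
  have h2inst : ∀ x, ∃ m ∈ rImp (u x) (eqX x0 x), m ∈ Phi (EU.c2 n) (EU.c3 n) :=
    fun x => (EU.mem_rAll.1 (EU.mem_rAll.1 hn2 x0) x) _ hx0
  obtain ⟨t1, -, ht1mem⟩ := h2inst x0
  have ht1all : ∀ x, t1 ∈ rImp (u x) (eqX x0 x) := EU.uniform ht1mem h2inst
  -- r
  obtain ⟨r, hr, hrmem⟩ := ht1all x0 _ hx0
  -- t2
  have h1inst : ∀ x, ∃ m ∈ rImp (eqX x0 x) (u x), m ∈ Phi (EU.c1 n) (EU.c3 n) :=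
    fun x => (EU.mem_rAll.1 (EU.mem_rAll.1 hn1 x0) x) _ hx0
  obtain ⟨t2, -, ht2mem⟩ := h1inst x0
  have ht2all : ∀ x, t2 ∈ rImp (eqX x0 x) (u x) := EU.uniform ht2mem h1inst
  -- E realises elEq eqX u (el eqX x0)
  have hE : EU.EE n t1 t2 ∈ elEq eqX u (el eqX x0) :=
    EU.rAnd_intro hn1 (EU.rAnd_intro hn2 (EU.rAnd_intro hn3
      (EU.mem_rAll.2 fun x => EU.rAnd_intro (ht1all x) (ht2all x))))
  -- a, b, c, d
  obtain ⟨a, haG, hamem⟩ := (EU.mem_rAll.1 (EU.mem_rAll.1 hG0 u) (el eqX x0)) _ hE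
  obtain ⟨b, hbG, hbmem⟩ := (EU.mem_rAll.1 (EU.mem_rAll.1 hH0 u) (el eqX x0)) _ hE
  obtain ⟨c, hcG, hcmem⟩ := (EU.mem_rAll.1 hGe x0) _ hr
  obtain ⟨d, hdG, hdmem⟩ := (EU.mem_rAll.1 hHe x0) _ hr
  -- decompose a, b, c, d
  have ha1 := (EU.mem_rAnd.1 haG).1
  have ha2 := (EU.mem_rAnd.1 (EU.mem_rAnd.1 haG).2).1
  have ha3 := (EU.mem_rAnd.1 (EU.mem_rAnd.1 (EU.mem_rAnd.1 haG).2).2).1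
  have ha4 : EU.c4 a ∈ rAll fun y => rIff (g u y) (g (el eqX x0) y) :=
    (EU.mem_rAnd.1 (EU.mem_rAnd.1 (EU.mem_rAnd.1 haG).2).2).2
  have hb4 : EU.c4 b ∈ rAll fun y => rIff (h u y) (h (el eqX x0) y) :=
    (EU.mem_rAnd.1 (EU.mem_rAnd.1 (EU.mem_rAnd.1 hbG).2).2).2
  have hc4 : EU.c4 c ∈ rAll fun y => rIff (g (el eqX x0) y) (f x0 y) :=
    (EU.mem_rAnd.1 (EU.mem_rAnd.1 (EU.mem_rAnd.1 hcG).2).2).2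
  have hd4 : EU.c4 d ∈ rAll fun y => rIff (h (el eqX x0) y) (f x0 y) :=
    (EU.mem_rAnd.1 (EU.mem_rAnd.1 (EU.mem_rAnd.1 hdG).2).2).2
  -- the output realises elEq eqY (g u) (h u)
  have hout : EU.out a b c d ∈ elEq eqY (g u) (h u) := by
    refine EU.rAnd_intro ha1 (EU.rAnd_intro ha2 (EU.rAnd_intro ha3
      (EU.mem_rAll.2 fun y => EU.rAnd_intro ?_ ?_)))
    · -- forward : g u y → h u y
      intro p hp
      obtain ⟨q1, hq1, hq1m⟩ := (EU.mem_rAnd.1 (EU.mem_rAll.1 ha4 y)).1 _ hp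
      obtain ⟨q2, hq2, hq2m⟩ := (EU.mem_rAnd.1 (EU.mem_rAll.1 hc4 y)).1 _ hq1
      obtain ⟨q3, hq3, hq3m⟩ := (EU.mem_rAnd.1 (EU.mem_rAll.1 hd4 y)).2 _ hq2
      obtain ⟨q4, hq4, hq4m⟩ := (EU.mem_rAnd.1 (EU.mem_rAll.1 hb4 y)).2 _ hq3
      exact ⟨q4, hq4, EU.cComp_spec (EU.cComp_spec hq1m hq2m) (EU.cComp_spec hq3m hq4m)⟩
    · -- backward : h u y → g u y
      intro p hp
      obtain ⟨q1, hq1, hq1m⟩ := (EU.mem_rAnd.1 (EU.mem_rAll.1 hb4 y)).1 _ hp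
      obtain ⟨q2, hq2, hq2m⟩ := (EU.mem_rAnd.1 (EU.mem_rAll.1 hd4 y)).1 _ hq1
      obtain ⟨q3, hq3, hq3m⟩ := (EU.mem_rAnd.1 (EU.mem_rAll.1 hc4 y)).2 _ hq2
      obtain ⟨q4, hq4, hq4m⟩ := (EU.mem_rAnd.1 (EU.mem_rAll.1 ha4 y)).2 _ hq3
      exact ⟨q4, hq4, EU.cComp_spec (EU.cComp_spec hq1m hq2m) (EU.cComp_spec hq3m hq4m)⟩
  -- the output is computed by the code on input n
  set s1 := Nat.pair n t1 with hs1def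
  set s2 := Nat.pair s1 r with hs2def
  set s3 := Nat.pair s2 t2 with hs3def
  set s4 := Nat.pair s3 a with hs4def
  set s5 := Nat.pair s4 b with hs5def
  set s6 := Nat.pair s5 c with hs6def
  set s7 := Nat.pair s6 d with hs7def
  have m1 : s1 ∈ EU.st1 n := EU.step_mem ht1mem
  have m2 : s2 ∈ (EU.st1 n).bind EU.st2 :=
    Part.mem_bind_iff.2 ⟨s1, m1, EU.step_mem (by
      simp only [hs1def, EU.pL_pair, EU.pR_pair]; exact hrmem)⟩
  have m3 : s3 ∈ ((EU.st1 n).bind EU.st2).bind EU.st3 :=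
    Part.mem_bind_iff.2 ⟨s2, m2, EU.step_mem (by
      simp only [hs2def, hs1def, EU.pL_pair, EU.pR_pair]; exact ht2mem)⟩
  have m4 : s4 ∈ (((EU.st1 n).bind EU.st2).bind EU.st3).bind (EU.st4 G0) :=
    Part.mem_bind_iff.2 ⟨s3, m3, EU.step_mem (by
      simp only [hs3def, hs2def, hs1def, EU.pL_pair, EU.pR_pair]; exact hamem)⟩
  have m5 : s5 ∈ ((((EU.st1 n).bind EU.st2).bind EU.st3).bind (EU.st4 G0)).bind (EU.st5 H0) :=
    Part.mem_bind_iff.2 ⟨s4, m4, EU.step_mem (by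
      simp only [hs4def, hs3def, hs2def, hs1def, EU.pL_pair, EU.pR_pair]; exact hbmem)⟩
  have m6 : s6 ∈ (((((EU.st1 n).bind EU.st2).bind EU.st3).bind (EU.st4 G0)).bind
      (EU.st5 H0)).bind (EU.st6 Ge) :=
    Part.mem_bind_iff.2 ⟨s5, m5, EU.step_mem (by
      simp only [hs5def, hs4def, hs3def, hs2def, hs1def, EU.pL_pair, EU.pR_pair]; exact hcmem)⟩
  have m7 : s7 ∈ ((((((EU.st1 n).bind EU.st2).bind EU.st3).bind (EU.st4 G0)).bind
      (EU.st5 H0)).bind (EU.st6 Ge)).bind (EU.st7 He) :=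
    Part.mem_bind_iff.2 ⟨s6, m6, EU.step_mem (by
      simp only [hs6def, hs5def, hs4def, hs3def, hs2def, hs1def, EU.pL_pair, EU.pR_pair]
      exact hdmem)⟩
  have houtF : EU.outF s7 = EU.out a b c d := by
    simp only [hs7def, hs6def, hs5def, hs4def, EU.outF, EU.pL_pair, EU.pR_pair]
  have hmem : EU.outF s7 ∈ EU.FF G0 H0 Ge He n :=
    (Part.mem_map_iff _).2 ⟨s7, m7, rfl⟩
  refine ⟨EU.out a b c d, hout, ?_⟩
  rw [hPhi, ← houtF]
  exact hmem
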